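/- arXiv:1905.11838 — 3 statements merged into one kernel-verified Lean document; each statement's English description precedes it below -/
import Mathlib

section
/- Fix the candidate set C = {a,b,c} and a normalized score vector α of length 3, and for each ordered pair (u,v) of distinct candidates fix a profile P_u^v as in the context. Let w_1,…,w_n be positive integers each divisible by 8, let M be a positive integer divisible by 8, let k be a positive integer with k ≤ n, 2k < n and M < ∑_{i=1}^n w_i, and let M' be an integer divisible by 8 with M' > ∑_{i=1}^n w_i. Define voter groups: for each i ∈ [n], G_i consists of w_i copies of P_a^c and M' − w_i copies of P_b^c; and Ĝ consists of (kM'+M)/2 − 3 copies of P_c^a, (kM'−M)/2 − 1 copies of P_c^b, and (kM'−M)/2 − 1 copies of P_a^b. Then the Optimal Attack instance (C, {G_1,…,G_n, Ĝ}, k_a = n+1, k_d = k) for the scoring rule of α is a Yes instance if and only if there is NO index set I ⊆ [n] with |I| = k and ∑_{i∈I} w_i = M. -/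
open Finset

/-- A vote over a candidate set `C` with `m` candidates: a ranking assigning each
candidate its position. -/
abbrev Vote (C : Type*) (m : ℕ) := C ≃ Fin m

/-- The score of candidate `x` in profile `P` under score vector `α`. -/
def score {C : Type*} {m : ℕ} (α : Fin m → ℝ) (P : Multiset (Vote C m)) (x : C) : ℝ :=
  (P.map fun v => α (v x)).sum

/-- The scoring rule of `α`: the set of candidates with maximum score. -/
def scoringRule {C : Type*} {m : ℕ} (α : Fin m → ℝ) (P : Multiset (Vote C m)) : Set C :=
  {x | ∀ y, score α P y ≤ score α P x}

/-- `margin P x y`: number of votes preferring `x` to `y` minus those preferring `y` to `x`. -/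
def margin {C : Type*} {m : ℕ} (P : Multiset (Vote C m)) (x y : C) : ℤ :=
  ((P.filter fun v => v x < v y).card : ℤ) - ((P.filter fun v => v y < v x).card : ℤ)

/-- `c` is the Condorcet winner of `P`. -/
def CondorcetWinner {C : Type*} {m : ℕ} (P : Multiset (Vote C m)) (c : C) : Prop :=
  ∀ y, y ≠ c → 0 < margin P c y

/-- The Condorcet voting rule: `{c}` if a Condorcet winner `c` exists, all candidates otherwise. -/
def condorcetRule {C : Type*} {m : ℕ} (P : Multiset (Vote C m)) : Set C :=
  {x | CondorcetWinner P x ∨ ¬ ∃ c, CondorcetWinner P c}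

/-- `α` is monotone nonincreasing (part of being a score vector). -/
def IsMonotoneScore {m : ℕ} (α : Fin m → ℝ) : Prop :=
  ∀ i j : Fin m, i ≤ j → α j ≤ α i

/-- `α` is normalized: some consecutive difference is `1` and all later entries are `0`. -/
def IsNormalized {m : ℕ} (α : Fin m → ℝ) : Prop :=
  ∃ j : ℕ, ∃ hj : j + 1 < m, α ⟨j, Nat.lt_of_succ_lt hj⟩ - α ⟨j + 1, hj⟩ = 1 ∧
    ∀ ℓ : Fin m, j < (ℓ : ℕ) → α ℓ = 0

/-- `Q` is a profile `P_u^v`: it has `m` votes and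
`s_Q(u) + 1 = s_Q(v) - 1 = s_Q(z)` for every `z ∉ {u, v}`. -/
def PfGood {C : Type*} {m : ℕ} (α : Fin m → ℝ) (Q : Multiset (Vote C m)) (u v : C) : Prop :=
  Multiset.card Q = m ∧ score α Q u + 1 = score α Q v - 1 ∧
    ∀ z : C, z ≠ u → z ≠ v → score α Q z = score α Q v - 1

/-- The Optimal Defense instance with groups `G`, attacker resource `ka` and defender
resource `kd` is a Yes instance for voting rule `r`. -/
def DefenseYes {C : Type*} {m N : ℕ} (r : Multiset (Vote C m) → Set C)
    (G : Fin N → Multiset (Vote C m)) (ka kd : ℕ) : Prop :=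
  ∃ I : Finset (Fin N), I.card ≤ kd ∧
    ∀ I' : Finset (Fin N), Disjoint I I' → I'.card ≤ ka →
      r (∑ i ∈ Finset.univ \ I', G i) = r (∑ i, G i)

/-- The Optimal Attack instance with groups `G`, attacker resource `ka` and defender
resource `kd` is a Yes instance for voting rule `r`. -/
def AttackYes {C : Type*} {m N : ℕ} (r : Multiset (Vote C m) → Set C)
    (G : Fin N → Multiset (Vote C m)) (ka kd : ℕ) : Prop :=
  ∃ I : Finset (Fin N), I.card ≤ ka ∧
    ∀ I' : Finset (Fin N), I'.card ≤ kd →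
      r (∑ i ∈ Finset.univ \ (I \ I'), G i) ≠ r (∑ i, G i)

/-! Only score differences matter, and `P_u^v` moves `v` up and `u` down by one relative to
every other candidate. If `t` groups `G_i` of total weight `W` survive, `c` leads `a` by
`t M' + W` and `b` by `2 t M' - W`, plus `6 - k M' - M`, resp. `6 - 2 k M' + M`, if `Ĝ` survives.
So `c` wins the full election, and `c` is still the unique winner exactly when either `Ĝ` is
deleted and some `G_i` survives, or `Ĝ` survives together with more than `k` groups `G_i`, or
with exactly `k` of them of total weight `M` (all weights are multiples of `8`, and the margins
are off by `6`). Deleting all `G_i` defeats every defence iff no `k` weights sum to `M`; any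
other attack is undone by restoring one `G_i` (if `Ĝ` was deleted), nothing, `k` further `G_i`
(there are enough since `n > 2k`), or a solution of the k-Sum instance. -/

theorem Set.setOf_forall_le_eq_singleton_iff {β γ : Type*} [LinearOrder γ] (f : β → γ)
    (c : β) :
    {x | ∀ y, f y ≤ f x} = {c} ↔ ∀ y ≠ c, f y < f c := by
  constructor
  · intro h y hy
    have hc : ∀ z, f z ≤ f c := (Set.ext_iff.1 h c).2 rfl
    by_contra! hyc
    exact hy ((Set.ext_iff.1 h y).1 fun z => (hc z).trans hyc)
  · intro h
    ext x
    simp only [Set.mem_ofPred_eq, Set.mem_singleton_iff]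
    refine ⟨fun hx => ?_, fun hx y => ?_⟩
    · by_contra hxc
      exact (h x hxc).not_ge (hx c)
    · subst hx
      rcases eq_or_ne y x with rfl | hy
      · exact le_rfl
      · exact (h y hy).le

theorem forall_ne_lt_iff_of_forall_eq_or_eq_or_eq {β γ : Type*} [Preorder γ] {a b c : β}
    (hC : ∀ x, x = a ∨ x = b ∨ x = c) (hac : a ≠ c) (hbc : b ≠ c) (f : β → γ) :
    (∀ y ≠ c, f y < f c) ↔ f a < f c ∧ f b < f c := by
  refine ⟨fun h => ⟨h a hac, h b hbc⟩, fun ⟨ha, hb⟩ y hy => ?_⟩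
  rcases hC y with rfl | rfl | rfl
  · exact ha
  · exact hb
  · exact absurd rfl hy

theorem Fintype.eq_or_eq_or_eq_of_card_eq_three {α : Type*} [Fintype α] [DecidableEq α]
    (h : Fintype.card α = 3) {a b c : α} (hab : a ≠ b) (hac : a ≠ c) (hbc : b ≠ c)
    (x : α) :
    x = a ∨ x = b ∨ x = c := by
  have huniv : ({a, b, c} : Finset α) = univ :=
    eq_univ_of_card _ (by rw [card_eq_three.2 ⟨a, b, c, hab, hac, hbc, rfl⟩, h])
  simpa [← huniv] using mem_univ x

section NetScore

variable {C : Type*} {m : ℕ} {α : Fin m → ℝ}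

def HasNetScore (α : Fin m → ℝ) (P : Multiset (Vote C m)) (d : C → ℤ) : Prop :=
  ∃ K : ℝ, ∀ x, score α P x = K + d x

namespace HasNetScore

variable {P Q : Multiset (Vote C m)} {d e : C → ℤ}

theorem zero : HasNetScore α (0 : Multiset (Vote C m)) 0 := ⟨0, by simp [score]⟩

theorem add (hP : HasNetScore α P d) (hQ : HasNetScore α Q e) :
    HasNetScore α (P + Q) (d + e) := by
  obtain ⟨K, hK⟩ := hP
  obtain ⟨L, hL⟩ := hQ
  refine ⟨K + L, fun x => ?_⟩
  simp only [score, Multiset.map_add, Multiset.sum_add] at hK hL ⊢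
  rw [hK, hL, Pi.add_apply, Int.cast_add]
  ring

theorem nsmul (hP : HasNetScore α P d) (r : ℕ) : HasNetScore α (r • P) (r • d) := by
  induction r with
  | zero => simpa using zero
  | succ r ih => simpa only [succ_nsmul] using ih.add hP

theorem sum {ι : Type*} {P : ι → Multiset (Vote C m)} {d : ι → C → ℤ} (s : Finset ι)
    (h : ∀ i ∈ s, HasNetScore α (P i) (d i)) :
    HasNetScore α (∑ i ∈ s, P i) (∑ i ∈ s, d i) := by
  classical
  induction s using Finset.induction with
  | empty => simpa using zero
  | insert j s hj ih =>
    rw [sum_insert hj, sum_insert hj]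
    exact (h j (mem_insert_self j s)).add (ih fun i hi => h i (mem_insert_of_mem hi))

theorem scoringRule_eq (h : HasNetScore α P d) : scoringRule α P = {x | ∀ y, d y ≤ d x} := by
  obtain ⟨K, hK⟩ := h
  ext x
  simp only [scoringRule, Set.mem_ofPred_eq, hK, add_le_add_iff_left, Int.cast_le]

end HasNetScore

theorem PfGood.hasNetScore [DecidableEq C] {Q : Multiset (Vote C m)} {u v : C}
    (h : PfGood α Q u v) : HasNetScore α Q (Pi.single v 1 - Pi.single u 1) := by
  obtain ⟨-, huv, hz⟩ := h
  have hne : u ≠ v := by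
    rintro rfl
    linarith
  refine ⟨score α Q v - 1, fun x => ?_⟩
  by_cases hxu : x = u
  · subst hxu
    simp [hne]
    linarith
  by_cases hxv : x = v
  · subst hxv
    simp [hne.symm]
  · simp [hxu, hxv, hz x hxu hxv]

end NetScore

section CastSuccPreimage

variable {n : ℕ}

def castSuccPreimage (R : Finset (Fin (n + 1))) : Finset (Fin n) :=
  univ.filter fun i => i.castSucc ∈ R

@[simp]
theorem mem_castSuccPreimage {R : Finset (Fin (n + 1))} {i : Fin n} :
    i ∈ castSuccPreimage R ↔ i.castSucc ∈ R := by
  simp [castSuccPreimage]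

@[simp]
theorem castSuccPreimage_univ : castSuccPreimage (univ : Finset (Fin (n + 1))) = univ := by
  ext
  simp

theorem card_castSuccPreimage_le (R : Finset (Fin (n + 1))) : #(castSuccPreimage R) ≤ #R :=
  card_le_card_of_injOn Fin.castSucc (fun _ hi => mem_castSuccPreimage.1 hi)
    (Fin.castSucc_injective n).injOn

theorem castSuccPreimage_univ_sdiff_sdiff_map (I : Finset (Fin (n + 1))) (J : Finset (Fin n)) :
    castSuccPreimage (univ \ (I \ J.map Fin.castSuccEmb)) = castSuccPreimage (univ \ I) ∪ J := by
  ext i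
  simp [imp_iff_not_or]

theorem sum_eq_sum_castSuccPreimage_add {β : Type*} [AddCommMonoid β]
    (f : Fin (n + 1) → β) (R : Finset (Fin (n + 1))) :
    ∑ j ∈ R, f j =
      ∑ i ∈ castSuccPreimage R, f i.castSucc +
        if Fin.last n ∈ R then f (Fin.last n) else 0 := by
  rw [castSuccPreimage, sum_filter, ← Fin.sum_univ_castSucc fun j => if j ∈ R then f j else 0,
    ← sum_filter, filter_mem_eq_inter, univ_inter]

end CastSuccPreimage

section KSumReduction

variable {C : Type*} {m n : ℕ}

def kSumGroups (Pf : C → C → Multiset (Vote C m)) (a b c : C) (w : Fin n → ℕ)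
    (M k M' : ℕ) :
    Fin (n + 1) → Multiset (Vote C m) :=
  Fin.snoc (fun i : Fin n => w i • Pf a c + (M' - w i) • Pf b c)
    (((k * M' + M) / 2 - 3) • Pf c a + ((k * M' - M) / 2 - 1) • Pf c b +
      ((k * M' - M) / 2 - 1) • Pf a b)

def kSumNetScores [DecidableEq C] (a b c : C) (w : Fin n → ℕ) (M k M' : ℕ) :
    Fin (n + 1) → C → ℤ :=
  Fin.snoc
    (fun i : Fin n => w i • (Pi.single c 1 - Pi.single a 1) +
      (M' - w i) • (Pi.single c 1 - Pi.single b 1))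
    (((k * M' + M) / 2 - 3) • (Pi.single a 1 - Pi.single c 1) +
      ((k * M' - M) / 2 - 1) • (Pi.single b 1 - Pi.single c 1) +
      ((k * M' - M) / 2 - 1) • (Pi.single b 1 - Pi.single a 1))

theorem hasNetScore_kSumGroups [DecidableEq C] {α : Fin m → ℝ}
    {Pf : C → C → Multiset (Vote C m)} (hPf : ∀ u v : C, u ≠ v → PfGood α (Pf u v) u v)
    {a b c : C} (hab : a ≠ b) (hac : a ≠ c) (hbc : b ≠ c) (w : Fin n → ℕ) (M k M' : ℕ)
    (j : Fin (n + 1)) :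
    HasNetScore α (kSumGroups Pf a b c w M k M' j) (kSumNetScores a b c w M k M' j) := by
  have hnet : ∀ u v, u ≠ v → HasNetScore α (Pf u v) (Pi.single v 1 - Pi.single u 1) :=
    fun u v h => (hPf u v h).hasNetScore
  induction j using Fin.lastCases with
  | last =>
    simp only [kSumGroups, kSumNetScores, Fin.snoc_last]
    exact (((hnet c a hac.symm).nsmul _).add ((hnet c b hbc.symm).nsmul _)).add
      ((hnet a b hab).nsmul _)
  | cast i =>
    simp only [kSumGroups, kSumNetScores, Fin.snoc_castSucc]
    exact ((hnet a c hac).nsmul _).add ((hnet b c hbc).nsmul _)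

theorem two_mul_kSum_hat_multiplicities {K M : ℕ} (hM8 : 8 ∣ M) (hK8 : 8 ∣ K) (hMK : M < K) :
    2 * (((K + M) / 2 - 3 : ℕ) : ℤ) = K + M - 6 ∧
      2 * (((K - M) / 2 - 1 : ℕ) : ℤ) = K - M - 2 := by
  omega

section Margins

variable [DecidableEq C] {a b c : C} {w : Fin n → ℕ} {M k M' : ℕ}

theorem kSumNetScores_c_sub_a (hab : a ≠ b) (hac : a ≠ c) (hbc : b ≠ c)
    (hwM' : ∀ i, w i ≤ M') (hM8 : 8 ∣ M) (hK8 : 8 ∣ k * M') (hMK : M < k * M')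
    (j : Fin (n + 1)) :
    kSumNetScores a b c w M k M' j c - kSumNetScores a b c w M k M' j a =
      Fin.snoc (α := fun _ => ℤ) (fun i => (M' : ℤ) + w i) (6 - (k : ℤ) * M' - M) j := by
  induction j using Fin.lastCases with
  | last =>
    have := two_mul_kSum_hat_multiplicities hM8 hK8 hMK
    push_cast at this
    simp [kSumNetScores, hab, hac, hac.symm, hbc.symm]
    linarith
  | cast i => simp [kSumNetScores, hab, hac, hac.symm, hbc.symm, Nat.cast_sub (hwM' i)]

theorem kSumNetScores_c_sub_b (hab : a ≠ b) (hac : a ≠ c) (hbc : b ≠ c)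
    (hwM' : ∀ i, w i ≤ M') (hM8 : 8 ∣ M) (hK8 : 8 ∣ k * M') (hMK : M < k * M')
    (j : Fin (n + 1)) :
    kSumNetScores a b c w M k M' j c - kSumNetScores a b c w M k M' j b =
      Fin.snoc (α := fun _ => ℤ) (fun i => 2 * (M' : ℤ) - w i)
        (6 - 2 * (k : ℤ) * M' + M) j := by
  induction j using Fin.lastCases with
  | last =>
    have := two_mul_kSum_hat_multiplicities hM8 hK8 hMK
    push_cast at this
    simp [kSumNetScores, hbc, hab.symm, hac.symm, hbc.symm]
    linarith
  | cast i =>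
    simp [kSumNetScores, hbc, hab.symm, hac.symm, hbc.symm, Nat.cast_sub (hwM' i)]
    ring

theorem scoringRule_sum_kSumGroups_eq_singleton_iff {α : Fin m → ℝ}
    {Pf : C → C → Multiset (Vote C m)} (hPf : ∀ u v : C, u ≠ v → PfGood α (Pf u v) u v)
    (hab : a ≠ b) (hac : a ≠ c) (hbc : b ≠ c) (hC : ∀ x, x = a ∨ x = b ∨ x = c)
    (hwM' : ∀ i, w i ≤ M') (hM8 : 8 ∣ M) (hK8 : 8 ∣ k * M') (hMK : M < k * M')
    (R : Finset (Fin (n + 1))) :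
    scoringRule α (∑ j ∈ R, kSumGroups Pf a b c w M k M' j) = {c} ↔
      0 < ∑ i ∈ castSuccPreimage R, ((M' : ℤ) + w i) +
          (if Fin.last n ∈ R then 6 - (k : ℤ) * M' - M else 0) ∧
      0 < ∑ i ∈ castSuccPreimage R, (2 * (M' : ℤ) - w i) +
          (if Fin.last n ∈ R then 6 - 2 * (k : ℤ) * M' + M else 0) := by
  have hnet := HasNetScore.sum R fun j _ => hasNetScore_kSumGroups hPf hab hac hbc w M k M' j
  rw [hnet.scoringRule_eq, Set.setOf_forall_le_eq_singleton_iff,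
    forall_ne_lt_iff_of_forall_eq_or_eq_or_eq hC hac hbc]
  refine and_congr ?_ ?_ <;>
  · rw [← sub_pos, Finset.sum_apply, Finset.sum_apply, ← sum_sub_distrib]
    simp only [kSumNetScores_c_sub_a hab hac hbc hwM' hM8 hK8 hMK,
      kSumNetScores_c_sub_b hab hac hbc hwM' hM8 hK8 hMK, sum_eq_sum_castSuccPreimage_add,
      Fin.snoc_castSucc, Fin.snoc_last]

end Margins

-- Encodes "`c` is the unique winner of the groups indexed by `R`", the last index being `Ĝ`.
def KSumCWins (w : Fin n → ℕ) (k M : ℕ) (R : Finset (Fin (n + 1))) : Prop :=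
  if Fin.last n ∈ R then
    k < #(castSuccPreimage R) ∨
      (#(castSuccPreimage R) = k ∧ ∑ i ∈ castSuccPreimage R, w i = M)
  else (castSuccPreimage R).Nonempty

theorem kSum_margins_pos_iff {t k W M M' : ℕ} (hWM' : W < M') (hMM' : M < M') (hM : 0 < M)
    (hW8 : 8 ∣ W) (hM8 : 8 ∣ M) :
    (0 < (t : ℤ) * M' + W + (6 - (k : ℤ) * M' - M) ∧
        0 < (t : ℤ) * (2 * M') - W + (6 - 2 * (k : ℤ) * M' + M)) ↔
      k < t ∨ (t = k ∧ W = M) := by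
  have hM8' : 8 ≤ M := Nat.le_of_dvd hM hM8
  rcases lt_trichotomy t k with h | rfl | h
  · have : (t : ℤ) * M' + M' ≤ k * M' := by
      have : (t : ℤ) + 1 ≤ k := by exact_mod_cast h
      nlinarith
    refine iff_of_false (fun ⟨h1, _⟩ => ?_) (by omega)
    linarith
  · simp only [lt_irrefl, true_and, false_or]
    constructor
    · rintro ⟨h1, h2⟩
      have : (W : ℤ) < M + 6 := by linarith
      have : (M : ℤ) < W + 6 := by linarith
      omega
    · rintro rfl
      constructor <;> linarith
  · have : (k : ℤ) * M' + M' ≤ t * M' := by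
      have : (k : ℤ) + 1 ≤ t := by exact_mod_cast h
      nlinarith
    exact iff_of_true ⟨by linarith, by linarith⟩ (Or.inl h)

theorem kSumCWins_iff_margins_pos {w : Fin n → ℕ} {k M M' : ℕ} (hw8 : ∀ i, 8 ∣ w i)
    (hM8 : 8 ∣ M) (hM : 0 < M) (hMM' : M < M') (hsum : ∑ i, w i < M')
    (R : Finset (Fin (n + 1))) :
    KSumCWins w k M R ↔
      0 < ∑ i ∈ castSuccPreimage R, ((M' : ℤ) + w i) +
          (if Fin.last n ∈ R then 6 - (k : ℤ) * M' - M else 0) ∧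
      0 < ∑ i ∈ castSuccPreimage R, (2 * (M' : ℤ) - w i) +
          (if Fin.last n ∈ R then 6 - 2 * (k : ℤ) * M' + M else 0) := by
  unfold KSumCWins
  set T := castSuccPreimage R
  have hW : ∑ i ∈ T, w i < M' := (sum_le_sum_of_subset (subset_univ T)).trans_lt hsum
  simp only [sum_add_distrib, sum_sub_distrib, sum_const, nsmul_eq_mul, ← Nat.cast_sum]
  split_ifs with hlast
  · exact (kSum_margins_pos_iff hW hMM' hM (dvd_sum fun i _ => hw8 i) hM8).symm
  · simp only [add_zero]
    rcases T.eq_empty_or_nonempty with hT | hT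
    · simp [hT]
    · have : (1 : ℤ) ≤ #T := by exact_mod_cast hT.card_pos
      have : ((∑ i ∈ T, w i : ℕ) : ℤ) < M' := by exact_mod_cast hW
      exact iff_of_true hT ⟨by nlinarith, by nlinarith⟩

theorem exists_attack_kSumCWins_iff (w : Fin n → ℕ) {k M : ℕ} (hk : 0 < k) (h2k : 2 * k < n) :
    (∃ I : Finset (Fin (n + 1)), #I ≤ n + 1 ∧
        ∀ I' : Finset (Fin (n + 1)), #I' ≤ k → ¬KSumCWins w k M (univ \ (I \ I'))) ↔
      ¬∃ I : Finset (Fin n), #I = k ∧ ∑ i ∈ I, w i = M := by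
  constructor
  · rintro ⟨I, -, hI⟩ ⟨I₀, hI₀, hI₀M⟩
    by_cases hlast : Fin.last n ∈ I
    · have hn : 0 < n := by omega
      apply hI {Fin.castSucc ⟨0, hn⟩} (by rw [card_singleton]; exact hk)
      have : Fin.last n ∉ univ \ (I \ {Fin.castSucc ⟨0, hn⟩}) := by simp [hlast, hn.ne']
      simp only [KSumCWins, if_neg this]
      exact ⟨⟨0, hn⟩, by simp⟩
    · set T := castSuccPreimage (univ \ I)
      have hrestore : ∀ J : Finset (Fin n), #J ≤ k →
          ¬(k < #(T ∪ J) ∨ (#(T ∪ J) = k ∧ ∑ i ∈ T ∪ J, w i = M)) := by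
        intro J hJ
        have := hI (J.map Fin.castSuccEmb) (by simpa using hJ)
        rwa [KSumCWins, if_pos (by simp [hlast]), castSuccPreimage_univ_sdiff_sdiff_map] at this
      rcases T.eq_empty_or_nonempty with hT | hT
      · exact hrestore I₀ hI₀.le (Or.inr (by simp [hT, hI₀, hI₀M]))
      by_cases hTk : k < #T
      · exact hrestore ∅ (by simp) (Or.inl (by simpa using hTk))
      · obtain ⟨J, hJT, hJ⟩ : ∃ J ⊆ univ \ T, #J = k :=
          exists_subset_card_eq (by rw [card_univ_sdiff, Fintype.card_fin]; omega)
        refine hrestore J hJ.le (Or.inl ?_)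
        rw [card_union_of_disjoint (disjoint_of_subset_right hJT disjoint_sdiff), hJ]
        have := hT.card_pos
        omega
  · intro hno
    refine ⟨univ.erase (Fin.last n), card_erase_le.trans (by simp), fun I' hI' hwin => ?_⟩
    have hT : castSuccPreimage (univ \ (univ.erase (Fin.last n) \ I')) = castSuccPreimage I' := by
      ext i
      simp [Fin.castSucc_ne_last]
    rw [KSumCWins, if_pos (by simp), hT] at hwin
    have := (card_castSuccPreimage_le I').trans hI'
    rcases hwin with h | ⟨hcard, hsum⟩
    · omega
    · exact hno ⟨_, hcard, hsum⟩

end KSumReduction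

theorem stmt3_general {C : Type} [Fintype C] (hC : Fintype.card C = 3)
    (a b c : C) (hab : a ≠ b) (hac : a ≠ c) (hbc : b ≠ c)
    (α : Fin 3 → ℝ)
    (Pf : C → C → Multiset (Vote C 3))
    (hPf : ∀ u v : C, u ≠ v → PfGood α (Pf u v) u v)
    (n : ℕ) (w : Fin n → ℕ) (hw8 : ∀ i, 8 ∣ w i)
    (M k M' : ℕ) (hMpos : 0 < M) (hM8 : 8 ∣ M)
    (hkpos : 0 < k) (h2k : 2 * k < n)
    (hMsum : M < ∑ i, w i) (hM'8 : 8 ∣ M') (hM'big : (∑ i, w i) < M') :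
    AttackYes (scoringRule α)
      (Fin.snoc (fun i : Fin n => w i • Pf a c + (M' - w i) • Pf b c)
        (((k * M' + M) / 2 - 3) • Pf c a + ((k * M' - M) / 2 - 1) • Pf c b +
          ((k * M' - M) / 2 - 1) • Pf a b))
      (n + 1) k ↔
    ¬ ∃ I : Finset (Fin n), I.card = k ∧ ∑ i ∈ I, w i = M := by
  classical
  have hwM' : ∀ i, w i ≤ M' := fun i =>
    (single_le_sum (fun j _ => Nat.zero_le (w j)) (mem_univ i)).trans hM'big.le
  have hMM' : M < M' := hMsum.trans hM'big
  have hwins : ∀ R, scoringRule α (∑ j ∈ R, kSumGroups Pf a b c w M k M' j) = {c} ↔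
      KSumCWins w k M R := fun R =>
    (scoringRule_sum_kSumGroups_eq_singleton_iff hPf hab hac hbc
      (Fintype.eq_or_eq_or_eq_of_card_eq_three hC hab hac hbc) hwM' hM8
      (dvd_mul_of_dvd_right hM'8 k) (hMM'.trans_le (Nat.le_mul_of_pos_left M' hkpos)) R).trans
      (kSumCWins_iff_margins_pos hw8 hM8 hMpos hMM' hM'big R).symm
  have hfull : KSumCWins w k M univ := by
    simp only [KSumCWins, mem_univ, if_true, castSuccPreimage_univ, card_univ, Fintype.card_fin]
    omega
  change AttackYes _ (kSumGroups Pf a b c w M k M') _ _ ↔ _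
  rw [← exists_attack_kSumCWins_iff w hkpos h2k]
  simp only [AttackYes, (hwins univ).2 hfull, ne_eq, hwins]

/-- the k-Sum reduction instance for Optimal Attack under a scoring
rule with 3 candidates. -/
theorem stmt3 {C : Type} [Fintype C] [DecidableEq C] (hC : Fintype.card C = 3)
    (a b c : C) (hab : a ≠ b) (hac : a ≠ c) (hbc : b ≠ c)
    (α : Fin 3 → ℝ) (hmono : IsMonotoneScore α) (hnorm : IsNormalized α)
    (Pf : C → C → Multiset (Vote C 3))
    (hPf : ∀ u v : C, u ≠ v → PfGood α (Pf u v) u v)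
    (n : ℕ) (w : Fin n → ℕ) (hwpos : ∀ i, 0 < w i) (hw8 : ∀ i, 8 ∣ w i)
    (M k M' : ℕ) (hMpos : 0 < M) (hM8 : 8 ∣ M)
    (hkpos : 0 < k) (hkn : k ≤ n) (h2k : 2 * k < n)
    (hMsum : M < ∑ i, w i) (hM'8 : 8 ∣ M') (hM'big : (∑ i, w i) < M') :
    AttackYes (scoringRule α)
      (Fin.snoc (fun i : Fin n => w i • Pf a c + (M' - w i) • Pf b c)
        (((k * M' + M) / 2 - 3) • Pf c a + ((k * M' - M) / 2 - 1) • Pf c b +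
          ((k * M' - M) / 2 - 1) • Pf a b))
      (n + 1) k ↔
    ¬ ∃ I : Finset (Fin n), I.card = k ∧ ∑ i ∈ I, w i = M :=
  stmt3_general hC a b c hab hac hbc α Pf hPf n w hw8 M k M' hMpos hM8 hkpos h2k hMsum hM'8 hM'big
end

section
/- Let U = {z_1,…,z_n} be a universe, let S_1,…,S_t be nonempty subsets of U, and let k be a positive integer with k ≤ n. Fix the candidate set C = {x_1,…,x_t, y}. Let G_1,…,G_n be profiles over C such that for each i ∈ [n] and j ∈ [t]: D_{G_i}(y, x_j) = 2 if z_i ∈ S_j and D_{G_i}(y, x_j) = 0 otherwise, and D_{G_i}(x_j, x_ℓ) = 0 for all distinct j, ℓ ∈ [t] (such profiles exist). Then the Optimal Defense instance (C, {G_1,…,G_n}, k_a = n, k_d = k) for the Condorcet voting rule is a Yes instance if and only if there exists W ⊆ U with |W| = k and W ∩ S_j ≠ ∅ for every j ∈ [t] (i.e., the Hitting Set instance (U, {S_1,…,S_t}, k) is a Yes instance). -/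
open Finset

/-!
On any subfamily `s` of the groups, `y` beats `x_j` by `2 |s ∩ S_j|`, so no `x_j` ever beats `y`,
and `y` is the Condorcet winner of `s` exactly when `s` hits every `S_j`; as there are at least
two candidates, the rule outputs `{y}` exactly then. Since the attacker may delete every group
the defender does not protect, a defense `I` succeeds iff every superset of `I` hits all `S_j`,
i.e. iff `I` is a hitting set, and padding it to size `k` keeps it one.
-/

lemma margin_add {C : Type*} {m : ℕ} (P Q : Multiset (Vote C m)) (a b : C) :
    margin (P + Q) a b = margin P a b + margin Q a b := by
  simp only [margin, Multiset.filter_add, Multiset.card_add]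
  push_cast
  ring

lemma margin_sum {C ι : Type*} {m : ℕ} (s : Finset ι) (G : ι → Multiset (Vote C m)) (a b : C) :
    margin (∑ i ∈ s, G i) a b = ∑ i ∈ s, margin (G i) a b :=
  map_sum (AddMonoidHom.mk' (fun P => margin P a b) fun P Q => margin_add P Q a b) G s

lemma margin_swap {C : Type*} {m : ℕ} (P : Multiset (Vote C m)) (a b : C) :
    margin P b a = -margin P a b := by
  simp only [margin]
  ring

lemma CondorcetWinner.eq {C : Type*} {m : ℕ} {P : Multiset (Vote C m)} {a b : C}
    (ha : CondorcetWinner P a) (hb : CondorcetWinner P b) : a = b := by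
  by_contra hab
  have h₁ := ha b (Ne.symm hab)
  have h₂ := hb a hab
  rw [margin_swap] at h₂
  omega

lemma condorcetRule_eq_singleton {C : Type*} {m : ℕ} {P : Multiset (Vote C m)} {c : C}
    (hc : CondorcetWinner P c) : condorcetRule P = {c} := by
  ext z
  exact ⟨fun hz => hz.elim (fun hz => hz.eq hc) fun hnone => (hnone ⟨c, hc⟩).elim,
    fun hz => Or.inl (hz ▸ hc)⟩

lemma CondorcetWinner.of_condorcetRule_eq_singleton {C : Type*} {m : ℕ}
    {P : Multiset (Vote C m)} {c z : C} (h : condorcetRule P = {c}) (hz : z ≠ c) :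
    CondorcetWinner P c := by
  have hc : c ∈ condorcetRule P := h ▸ rfl
  refine hc.resolve_right fun hnone => hz ?_
  have hzc : z ∈ condorcetRule P := Or.inr hnone
  rwa [h] at hzc

lemma defenseYes_iff_of_card_le {C : Type*} {m N : ℕ} (r : Multiset (Vote C m) → Set C)
    (G : Fin N → Multiset (Vote C m)) {ka : ℕ} (kd : ℕ) (hka : N ≤ ka) :
    DefenseYes r G ka kd ↔ ∃ I : Finset (Fin N), #I ≤ kd ∧
      ∀ J, I ⊆ J → r (∑ i ∈ J, G i) = r (∑ i, G i) := by
  refine exists_congr fun I => and_congr_right fun _ => ⟨fun h J hIJ => ?_, fun h I' hI' _ => ?_⟩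
  · simpa using h (univ \ J) (disjoint_sdiff.mono_right (sdiff_subset_sdiff le_rfl hIJ))
      ((card_le_univ _).trans (by simpa using hka))
  · exact h _ (subset_sdiff.mpr ⟨subset_univ I, hI'⟩)

lemma exists_card_eq_hitting_iff {α ι : Type*} [Fintype α] [DecidableEq α] (S : ι → Finset α)
    {k : ℕ} (hk : k ≤ Fintype.card α) :
    (∃ W : Finset α, #W = k ∧ ∀ j, (W ∩ S j).Nonempty) ↔
      ∃ I : Finset α, #I ≤ k ∧ ∀ j, (I ∩ S j).Nonempty := by
  refine ⟨fun ⟨W, hW, hit⟩ => ⟨W, hW.le, hit⟩, fun ⟨I, hI, hit⟩ => ?_⟩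
  obtain ⟨W, hIW, -, hW⟩ := exists_subsuperset_card_eq (subset_univ I) hI (by simpa using hk)
  exact ⟨W, hW, fun j => (hit j).mono (inter_subset_inter_right hIW)⟩

lemma exists_apply_eq_of_card_eq_succ {C : Type*} [Fintype C] {t : ℕ} {x : Fin t → C}
    (hx : Function.Injective x) {y : C} (hxy : ∀ j, x j ≠ y) (hC : Fintype.card C = t + 1)
    {c : C} (hc : c ≠ y) : ∃ j, x j = c := by
  classical
  have hcard : #(insert y (univ.image x)) = Fintype.card C := by
    rw [card_insert_of_notMem (by simpa using hxy), card_image_of_injective _ hx, hC,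
      card_univ, Fintype.card_fin]
  have hmem : c ∈ insert y (univ.image x) := (eq_univ_of_card _ hcard).symm ▸ mem_univ c
  simpa [hc] using hmem

section HittingSetReduction

variable {n t : ℕ} {S : Fin t → Finset (Fin n)} {C : Type*} {x : Fin t → C} {y : C}
  {G : Fin n → Multiset (Vote C (t + 1))}

lemma margin_sum_eq_two_mul_card
    (hGyx : ∀ i j, margin (G i) y (x j) = if i ∈ S j then 2 else 0) (s : Finset (Fin n))
    (j : Fin t) : margin (∑ i ∈ s, G i) y (x j) = 2 * #(s ∩ S j) := by
  rw [margin_sum, sum_congr rfl fun i _ => hGyx i j, sum_ite_mem, sum_const, nsmul_eq_mul,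
    mul_comm]

lemma condorcetWinner_sum_iff [Fintype C] (hC : Fintype.card C = t + 1)
    (hx : Function.Injective x) (hxy : ∀ j, x j ≠ y)
    (hGyx : ∀ i j, margin (G i) y (x j) = if i ∈ S j then 2 else 0) (s : Finset (Fin n)) :
    CondorcetWinner (∑ i ∈ s, G i) y ↔ ∀ j, (s ∩ S j).Nonempty := by
  simp only [← card_pos]
  constructor
  · intro hy j
    have := hy (x j) (hxy j)
    rw [margin_sum_eq_two_mul_card hGyx] at this
    omega
  · intro hit c hc
    obtain ⟨j, rfl⟩ := exists_apply_eq_of_card_eq_succ hx hxy hC hc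
    rw [margin_sum_eq_two_mul_card hGyx]
    have := hit j
    omega

lemma condorcetRule_sum_eq_singleton_iff [Fintype C] (hC : Fintype.card C = t + 1)
    (hx : Function.Injective x) (hxy : ∀ j, x j ≠ y)
    (hGyx : ∀ i j, margin (G i) y (x j) = if i ∈ S j then 2 else 0) (s : Finset (Fin n)) :
    condorcetRule (∑ i ∈ s, G i) = {y} ↔ ∀ j, (s ∩ S j).Nonempty := by
  refine ⟨fun h j => ?_, fun h => condorcetRule_eq_singleton ?_⟩
  · exact (condorcetWinner_sum_iff hC hx hxy hGyx s).1
      (.of_condorcetRule_eq_singleton h (hxy j)) j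
  · exact (condorcetWinner_sum_iff hC hx hxy hGyx s).2 h

end HittingSetReduction

theorem stmt8_general (n t : ℕ) (S : Fin t → Finset (Fin n)) (hS : ∀ j, (S j).Nonempty)
    (k : ℕ) (hkn : k ≤ n)
    {C : Type} [Fintype C] (hC : Fintype.card C = t + 1)
    (x : Fin t → C) (hxinj : Function.Injective x) (y : C) (hxy : ∀ j, x j ≠ y)
    (G : Fin n → Multiset (Vote C (t + 1)))
    (hGyx : ∀ i j, margin (G i) y (x j) = if i ∈ S j then 2 else 0) :
    DefenseYes condorcetRule G n k ↔
    ∃ W : Finset (Fin n), W.card = k ∧ ∀ j, (W ∩ S j).Nonempty := by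
  have hrule := condorcetRule_sum_eq_singleton_iff hC hxinj hxy hGyx
  have hfull : condorcetRule (∑ i, G i) = {y} :=
    (hrule univ).2 fun j => by simpa using hS j
  rw [defenseYes_iff_of_card_le _ G k le_rfl, exists_card_eq_hitting_iff S (by simpa using hkn)]
  simp only [hfull, hrule]
  exact exists_congr fun I => and_congr_right fun _ =>
    ⟨fun h => h I subset_rfl, fun h J hIJ j => (h j).mono (inter_subset_inter_right hIJ)⟩

/-- the Hitting Set reduction instance for Optimal Defense under the
Condorcet voting rule. -/
theorem stmt8 (n t : ℕ) (S : Fin t → Finset (Fin n)) (hS : ∀ j, (S j).Nonempty)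
    (k : ℕ) (hk : 0 < k) (hkn : k ≤ n)
    {C : Type} [Fintype C] [DecidableEq C] (hC : Fintype.card C = t + 1)
    (x : Fin t → C) (hxinj : Function.Injective x) (y : C) (hxy : ∀ j, x j ≠ y)
    (G : Fin n → Multiset (Vote C (t + 1)))
    (hGyx : ∀ i j, margin (G i) y (x j) = if i ∈ S j then 2 else 0)
    (hGxx : ∀ i j l, j ≠ l → margin (G i) (x j) (x l) = 0) :
    DefenseYes condorcetRule G n k ↔
    ∃ W : Finset (Fin n), W.card = k ∧ ∀ j, (W ∩ S j).Nonempty :=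
  stmt8_general n t S hS k hkn hC x hxinj y hxy G hGyx
end

section
/- Let G = (V, E) be a graph with V = {v_1,…,v_n} and E = {e_1,…,e_m}, m ≥ 1, and let k be an integer with 2 ≤ k ≤ n. Fix the candidate set C = {x_1,…,x_m, y, d}, a normalized score vector α of length m+2, and for each ordered pair (u,v) of distinct candidates fix a profile P_u^v as in the context. Define voter groups: for each i ∈ [n], G_i consists of 10m copies of P_d^x for every candidate x ∈ C∖{d}, together with 2 copies of P_{x_j}^d for every j ∈ [m] such that the edge e_j is incident on the vertex v_i; and H consists of one copy of P_d^{x_j} for every j ∈ [m]. Then the Optimal Attack instance (C, {G_1,…,G_n, H}, k_a = k, k_d = k − 2) for the scoring rule of α is a Yes instance if and only if G contains a clique of size k. -/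
open Finset

/-!
Relative to the other candidates, `P_u^v` moves `v` up by one point and `u` down by one.
Hence `y` beats `d` in every group, while `y`'s lead over `x_j` is `2` in the groups of the
two endpoints of `e_j`, `-1` in `H` and `0` in all other groups. So as long as some group
remains, `y` stays the unique winner exactly when every edge keeps an endpoint among the
remaining groups: removing a set of groups changes the outcome iff it contains both endpoints
of an edge. An attack on at most `k` groups that survives every restoration of `k - 2` of them
is therefore exactly a `k`-clique: restoring all members but two must still leave an edge
removed, so any two members are adjacent.
-/

lemma eq_or_eq_or_exists_eq_of_card_eq {C : Type*} [Fintype C] [DecidableEq C] {m : ℕ}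
    (hC : Fintype.card C = m + 2) {x : Fin m → C} (hxinj : Function.Injective x) {y d : C}
    (hyd : y ≠ d) (hxy : ∀ j, x j ≠ y) (hxd : ∀ j, x j ≠ d) (c : C) :
    c = y ∨ c = d ∨ ∃ j, c = x j := by
  have hall : insert y (insert d (univ.image x)) = univ := by
    refine eq_univ_of_card _ ?_
    rw [card_insert_of_notMem, card_insert_of_notMem, card_image_of_injective _ hxinj,
      card_fin, hC]
    · simpa using fun j => hxd j
    · simpa [hyd] using fun j => hxy j
  simpa [eq_comm] using eq_univ_iff_forall.mp hall c

section Scores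

variable {C : Type*} {μ : ℕ} (α : Fin μ → ℝ)

lemma score_add (P Q : Multiset (Vote C μ)) (c : C) :
    score α (P + Q) c = score α P c + score α Q c := by
  simp [score]

def scoreLead (a b : C) : Multiset (Vote C μ) →+ ℝ where
  toFun P := score α P a - score α P b
  map_zero' := by simp [score]
  map_add' P Q := by simp only [score_add]; ring

lemma scoreLead_apply (a b : C) (P : Multiset (Vote C μ)) :
    scoreLead α a b P = score α P a - score α P b := rfl

variable {α}

lemma scoringRule_eq_singleton_iff {P : Multiset (Vote C μ)} {c : C} :
    scoringRule α P = {c} ↔ ∀ z ≠ c, 0 < scoreLead α c z P := by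
  simp only [scoreLead_apply, sub_pos]
  constructor
  · intro h z hz
    have hc : c ∈ scoringRule α P := h ▸ rfl
    by_contra! hle
    exact hz (Set.eq_of_mem_singleton (h ▸ fun w => (hc w).trans hle))
  · intro h
    ext z
    refine ⟨fun hz => by_contra fun hzc => (hz c).not_gt (h z hzc), ?_⟩
    rintro rfl w
    by_cases hw : w = z
    · rw [hw]
    · exact (h w hw).le

lemma PfGood.scoreLead_eq [DecidableEq C] {Q : Multiset (Vote C μ)} {u v : C}
    (h : PfGood α Q u v) (a b : C) :
    scoreLead α a b Q = ((if a = v then 1 else 0) - if a = u then 1 else 0) -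
      ((if b = v then 1 else 0) - if b = u then 1 else 0) := by
  obtain ⟨-, huv, hz⟩ := h
  have huv' : u ≠ v := by rintro rfl; linarith
  have key : ∀ c, score α Q c = score α Q v - 1 + (if c = v then 1 else 0) -
      (if c = u then 1 else 0) := by
    intro c
    by_cases hcv : c = v
    · subst hcv; simp [huv'.symm]
    by_cases hcu : c = u
    · subst hcu; simp only [huv', ↓reduceIte, add_zero]; linarith
    · simp [hcv, hcu, hz c hcu hcv]
  rw [scoreLead_apply, key a, key b]
  ring

end Scores

namespace SimpleGraph

variable {β : Type*} [DecidableEq β] {G : SimpleGraph β} {k : ℕ} {I : Finset β}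

theorem IsNClique.exists_adj_sdiff (hI : G.IsNClique k I) (hk : 2 ≤ k) {I' : Finset β}
    (hI' : I'.card ≤ k - 2) : ∃ a ∈ I \ I', ∃ b ∈ I \ I', G.Adj a b := by
  have hcard : 1 < (I \ I').card := by
    have := le_card_sdiff I' I
    rw [hI.card_eq] at this
    omega
  obtain ⟨a, ha, b, hb, hab⟩ := one_lt_card.mp hcard
  exact ⟨a, ha, b, hb, hI.isClique (mem_sdiff.mp ha).1 (mem_sdiff.mp hb).1 hab⟩

theorem isNClique_of_forall_exists_adj_sdiff (hI : I.card ≤ k)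
    (h : ∀ I' : Finset β, I'.card ≤ k - 2 → ∃ a ∈ I \ I', ∃ b ∈ I \ I', G.Adj a b) :
    G.IsNClique k I := by
  have hcard : I.card = k := by
    refine le_antisymm hI (by_contra fun hlt => ?_)
    obtain ⟨I', hI'I, hI'⟩ := exists_subset_card_eq (s := I) (n := I.card - 1) (by omega)
    obtain ⟨a, ha, b, hb, hab⟩ := h I' (by omega)
    have : (I \ I').card ≤ 1 := by rw [card_sdiff_of_subset hI'I]; omega
    exact hab.ne (card_le_one.mp this a ha b hb)
  refine ⟨fun a ha b hb hab => ?_, hcard⟩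
  have hsub : ({a, b} : Finset β) ⊆ I := insert_subset_iff.mpr ⟨ha, singleton_subset_iff.mpr hb⟩
  obtain ⟨a', ha', b', hb', hadj⟩ := h (I \ {a, b}) (by
    rw [card_sdiff_of_subset hsub, card_pair hab, hcard])
  rw [Finset.sdiff_sdiff_eq_self hsub] at ha' hb'
  simp only [mem_insert, mem_singleton] at ha' hb'
  rcases ha' with rfl | rfl <;> rcases hb' with rfl | rfl
  exacts [(hadj.ne rfl).elim, hadj, hadj.symm, (hadj.ne rfl).elim]

theorem exists_forall_exists_adj_sdiff_iff (hk : 2 ≤ k) :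
    (∃ I : Finset β, I.card ≤ k ∧
      ∀ I' : Finset β, I'.card ≤ k - 2 → ∃ a ∈ I \ I', ∃ b ∈ I \ I', G.Adj a b) ↔
    ∃ I : Finset β, G.IsNClique k I :=
  ⟨fun ⟨I, hI, h⟩ => ⟨I, isNClique_of_forall_exists_adj_sdiff hI h⟩,
    fun ⟨I, hI⟩ => ⟨I, hI.card_eq.le, fun _ => hI.exists_adj_sdiff hk⟩⟩

end SimpleGraph

lemma sum_pos_iff_exists_castSucc_mem {n : ℕ} {D : Fin (n + 1) → ℝ} {p : Fin n → Prop}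
    [DecidablePred p] (hlast : D (Fin.last n) = -1)
    (hcast : ∀ v, D v.castSucc = if p v then 2 else 0) (R : Finset (Fin (n + 1))) :
    0 < ∑ i ∈ R, D i ↔ ∃ v, p v ∧ v.castSucc ∈ R := by
  constructor
  · intro hpos
    by_contra! hR
    refine hpos.not_ge (sum_nonpos fun i hi => ?_)
    induction i using Fin.lastCases with
    | last => rw [hlast]; norm_num
    | cast v =>
      rw [hcast, if_neg fun hv => hR v hv hi]
  · rintro ⟨v, hv, hvR⟩
    have hbound : ∀ i ∈ R,
        (if i = v.castSucc then 2 else 0) - (if i = Fin.last n then 1 else 0) ≤ D i := by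
      intro i _
      induction i using Fin.lastCases with
      | last => simp [hlast, (Fin.castSucc_lt_last v).ne']
      | cast w =>
        rw [hcast, if_neg (Fin.castSucc_lt_last w).ne]
        by_cases hwv : w = v
        · simp [hwv, hv]
        · split_ifs <;> simp_all
    calc (0 : ℝ) < 2 - if Fin.last n ∈ R then 1 else 0 := by split_ifs <;> norm_num
      _ = ∑ i ∈ R, ((if i = v.castSucc then 2 else 0) - if i = Fin.last n then 1 else 0) := by
        rw [sum_sub_distrib, sum_ite_eq', sum_ite_eq', if_pos hvR]
      _ ≤ ∑ i ∈ R, D i := sum_le_sum hbound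

lemma exists_forall_mem_map_mem_iff_exists_adj {ι V W : Type*} {e : ι → Sym2 V}
    (he : ∀ j, ¬ (e j).IsDiag) (f : V ↪ W) (S : Finset W) :
    (∃ j, ∀ v ∈ e j, f v ∈ S) ↔
      ∃ a ∈ S, ∃ b ∈ S, ((SimpleGraph.fromEdgeSet (Set.range e)).map f).Adj a b := by
  constructor
  · rintro ⟨j, hj⟩
    obtain ⟨v, hv⟩ := Sym2.mem_iff_exists.mp (e j).out_fst_mem
    set u := (e j).out.1
    have huv : u ≠ v := fun h => he j (by rw [hv, h, Sym2.mk_isDiag_iff])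
    refine ⟨f u, hj u (by simp [hv]), f v, hj v (by simp [hv]), ?_⟩
    rw [SimpleGraph.map_adj_apply, SimpleGraph.fromEdgeSet_adj]
    exact ⟨⟨j, hv⟩, huv⟩
  · rintro ⟨a, ha, b, hb, hab⟩
    obtain ⟨u, v, huv, rfl, rfl⟩ := (SimpleGraph.map_adj _ _ _ _).mp hab
    obtain ⟨⟨j, hj⟩, -⟩ := (SimpleGraph.fromEdgeSet_adj _).mp huv
    refine ⟨j, fun w hw => ?_⟩
    rw [hj, Sym2.mem_iff] at hw
    rcases hw with rfl | rfl <;> assumption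

section Gadget

variable {C : Type*} {μ n m : ℕ} {α : Fin μ → ℝ} {e : Fin m → Sym2 (Fin n)}
  {x : Fin m → C} {y d : C} {G : Fin (n + 1) → Multiset (Vote C μ)}

lemma scoringRule_sum_eq_singleton_iff (hclass : ∀ c, c = y ∨ c = d ∨ ∃ j, c = x j)
    (hxy : ∀ j, x j ≠ y) (hd : ∀ i, 0 < scoreLead α y d (G i))
    (hlast : ∀ j, scoreLead α y (x j) (G (Fin.last n)) = -1)
    (hcast : ∀ j v, scoreLead α y (x j) (G v.castSucc) = if v ∈ e j then 2 else 0)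
    {R : Finset (Fin (n + 1))} (hR : R.Nonempty) :
    scoringRule α (∑ i ∈ R, G i) = {y} ↔ ∀ j, ∃ v ∈ e j, v.castSucc ∈ R := by
  simp only [scoringRule_eq_singleton_iff, map_sum]
  constructor
  · intro h j
    exact (sum_pos_iff_exists_castSucc_mem (hlast j) (hcast j) R).mp (h _ (hxy j))
  · intro h z hz
    rcases hclass z with rfl | rfl | ⟨j, rfl⟩
    · exact absurd rfl hz
    · exact sum_pos (fun i _ => hd i) hR
    · exact (sum_pos_iff_exists_castSucc_mem (hlast j) (hcast j) R).mpr (h j)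

lemma scoringRule_sdiff_ne_iff (hclass : ∀ c, c = y ∨ c = d ∨ ∃ j, c = x j)
    (hxy : ∀ j, x j ≠ y) (hd : ∀ i, 0 < scoreLead α y d (G i))
    (hlast : ∀ j, scoreLead α y (x j) (G (Fin.last n)) = -1)
    (hcast : ∀ j v, scoreLead α y (x j) (G v.castSucc) = if v ∈ e j then 2 else 0)
    (he : ∀ j, ¬ (e j).IsDiag) {S : Finset (Fin (n + 1))} (hS : S ≠ univ) :
    scoringRule α (∑ i ∈ univ \ S, G i) ≠ scoringRule α (∑ i, G i) ↔
      ∃ a ∈ S, ∃ b ∈ S,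
        ((SimpleGraph.fromEdgeSet (Set.range e)).map Fin.castSuccEmb).Adj a b := by
  have hfull : scoringRule α (∑ i, G i) = {y} :=
    (scoringRule_sum_eq_singleton_iff hclass hxy hd hlast hcast univ_nonempty).mpr
      fun j => ⟨_, (e j).out_fst_mem, mem_univ _⟩
  have hR : (univ \ S).Nonempty := sdiff_nonempty.mpr fun h => hS (univ_subset_iff.mp h)
  rw [hfull, Ne, scoringRule_sum_eq_singleton_iff hclass hxy hd hlast hcast hR,
    ← exists_forall_mem_map_mem_iff_exists_adj he]
  simp [Fin.castSuccEmb_apply]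

end Gadget

section CliqueInstance

variable {n m μ : ℕ} {C : Type*} [DecidableEq C] {α : Fin μ → ℝ}
  {e : Fin m → Sym2 (Fin n)} {x : Fin m → C} {y d : C} {Pf : C → C → Multiset (Vote C μ)}

variable (e x d Pf) in
def vertexGroup [Fintype C] (i : Fin n) : Multiset (Vote C μ) :=
  (∑ z ∈ univ.erase d, (10 * m) • Pf d z) + ∑ j ∈ univ.filter (fun j => i ∈ e j), 2 • Pf (x j) d

variable (x d Pf) in
/-- The group `H` of the reduction. -/
def edgeGroup : Multiset (Vote C μ) :=
  ∑ j, Pf d (x j)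

lemma scoreLead_vertexGroup_x [Fintype C] (hPf : ∀ u v : C, u ≠ v → PfGood α (Pf u v) u v)
    (hxinj : Function.Injective x) (hyd : y ≠ d) (hxy : ∀ j, x j ≠ y) (hxd : ∀ j, x j ≠ d)
    (i : Fin n) (j : Fin m) :
    scoreLead α y (x j) (vertexGroup e x d Pf i) = if i ∈ e j then 2 else 0 := by
  have hPdz : ∀ z ∈ univ.erase d, scoreLead α y (x j) ((10 * m) • Pf d z) =
      (10 * m) • ((if y = z then 1 else 0) - if x j = z then 1 else 0) := by
    intro z hz
    rw [map_nsmul, (hPf d z (ne_of_mem_erase hz).symm).scoreLead_eq]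
    simp [hyd, hxd j]
  have hPxd : ∀ j', scoreLead α y (x j) (2 • Pf (x j') d) = if j = j' then 2 else 0 := by
    intro j'
    rw [map_nsmul, (hPf _ _ (hxd j')).scoreLead_eq]
    by_cases h : j = j' <;> simp [h, hyd, hxd, (hxy j').symm, hxinj.eq_iff]
  rw [vertexGroup, map_add, map_sum, map_sum, sum_congr rfl hPdz, sum_congr rfl fun j' _ => hPxd j',
    ← smul_sum, sum_sub_distrib, sum_ite_eq, sum_ite_eq, sum_ite_eq]
  simp [hyd, hxd j]

lemma scoreLead_vertexGroup_d_pos [Fintype C] (hPf : ∀ u v : C, u ≠ v → PfGood α (Pf u v) u v)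
    (hyd : y ≠ d) (hxy : ∀ j, x j ≠ y) (hxd : ∀ j, x j ≠ d) (hm : 1 ≤ m) (i : Fin n) :
    0 < scoreLead α y d (vertexGroup e x d Pf i) := by
  have hPdz : ∀ z ∈ univ.erase d,
      (if y = z then (10 * m : ℝ) else 0) ≤ scoreLead α y d ((10 * m) • Pf d z) := by
    intro z hz
    have hzd := ne_of_mem_erase hz
    rw [map_nsmul, (hPf d z hzd.symm).scoreLead_eq]
    by_cases h : y = z <;> simp [h, hyd, hzd, hzd.symm]
  have hPxd : ∀ j', scoreLead α y d (2 • Pf (x j') d) = -2 := by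
    intro j'
    rw [map_nsmul, (hPf _ _ (hxd j')).scoreLead_eq]
    simp [hyd, (hxy j').symm, (hxd j').symm]
  have hdeg : ((univ.filter fun j => i ∈ e j).card : ℝ) ≤ m := by
    exact_mod_cast (card_filter_le _ _).trans_eq (card_fin m)
  have hm' : (1 : ℝ) ≤ m := by exact_mod_cast hm
  calc (0 : ℝ) < 10 * m - 2 * (univ.filter fun j => i ∈ e j).card := by linarith
    _ = ∑ z ∈ univ.erase d, (if y = z then (10 * m : ℝ) else 0) +
        ∑ j ∈ univ.filter (fun j => i ∈ e j), scoreLead α y d (2 • Pf (x j) d) := by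
      rw [sum_ite_eq, if_pos (mem_erase.mpr ⟨hyd, mem_univ y⟩), sum_congr rfl fun j _ => hPxd j,
        sum_const, nsmul_eq_mul]
      ring
    _ ≤ scoreLead α y d (vertexGroup e x d Pf i) := by
      rw [vertexGroup, map_add, map_sum, map_sum]
      exact add_le_add_left (sum_le_sum hPdz) _

lemma scoreLead_edgeGroup_x (hPf : ∀ u v : C, u ≠ v → PfGood α (Pf u v) u v)
    (hxinj : Function.Injective x) (hyd : y ≠ d) (hxy : ∀ j, x j ≠ y) (hxd : ∀ j, x j ≠ d)
    (j : Fin m) :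
    scoreLead α y (x j) (edgeGroup x d Pf) = -1 := by
  have h : ∀ j', scoreLead α y (x j) (Pf d (x j')) = -if j = j' then 1 else 0 := by
    intro j'
    rw [(hPf _ _ (hxd j').symm).scoreLead_eq]
    simp [hyd, hxd j, (hxy j').symm, hxinj.eq_iff]
  simp [edgeGroup, map_sum, h]

lemma scoreLead_edgeGroup_d (hPf : ∀ u v : C, u ≠ v → PfGood α (Pf u v) u v)
    (hyd : y ≠ d) (hxy : ∀ j, x j ≠ y) (hxd : ∀ j, x j ≠ d) :
    scoreLead α y d (edgeGroup x d Pf) = m := by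
  have h : ∀ j, scoreLead α y d (Pf d (x j)) = 1 := by
    intro j
    rw [(hPf _ _ (hxd j).symm).scoreLead_eq]
    simp [hyd, (hxy j).symm, (hxd j).symm]
  simp [edgeGroup, map_sum, h]

end CliqueInstance

theorem stmt12_general (n m : ℕ) (hm : 1 ≤ m) (e : Fin m → Sym2 (Fin n))
    (hediag : ∀ j, ¬ (e j).IsDiag)
    (k : ℕ) (hk2 : 2 ≤ k) (hkn : k ≤ n)
    {C : Type} [Fintype C] [DecidableEq C] (hC : Fintype.card C = m + 2)
    (x : Fin m → C) (hxinj : Function.Injective x) (y d : C) (hyd : y ≠ d)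
    (hxy : ∀ j, x j ≠ y) (hxd : ∀ j, x j ≠ d)
    (α : Fin (m + 2) → ℝ)
    (Pf : C → C → Multiset (Vote C (m + 2)))
    (hPf : ∀ u v : C, u ≠ v → PfGood α (Pf u v) u v) :
    AttackYes (scoringRule α)
      (Fin.snoc
        (fun i : Fin n =>
          (∑ z ∈ Finset.univ.erase d, (10 * m) • Pf d z) +
            ∑ j ∈ Finset.univ.filter (fun j => i ∈ e j), 2 • Pf (x j) d)
        (∑ j, Pf d (x j)))
      k (k - 2) ↔
    ∃ T : Finset (Fin n), T.card = k ∧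
      ∀ u ∈ T, ∀ v ∈ T, u ≠ v → ∃ j, e j = s(u, v) := by
  set G : Fin (n + 1) → Multiset (Vote C (m + 2)) :=
    Fin.snoc (vertexGroup e x d Pf) (edgeGroup x d Pf)
  have hd : ∀ i, 0 < scoreLead α y d (G i) := Fin.lastCases
    (by simp only [G, Fin.snoc_last, scoreLead_edgeGroup_d hPf hyd hxy hxd, Nat.cast_pos]; omega)
    fun v => by simpa [G] using scoreLead_vertexGroup_d_pos hPf hyd hxy hxd hm v
  have hlast (j : Fin m) : scoreLead α y (x j) (G (Fin.last n)) = -1 := by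
    simpa [G] using scoreLead_edgeGroup_x hPf hxinj hyd hxy hxd j
  have hcast (j : Fin m) (v : Fin n) :
      scoreLead α y (x j) (G v.castSucc) = if v ∈ e j then 2 else 0 := by
    simpa [G] using scoreLead_vertexGroup_x hPf hxinj hyd hxy hxd v j
  have hchange (S : Finset (Fin (n + 1))) (hS : S.card ≤ n) :=
    scoringRule_sdiff_ne_iff (S := S) (eq_or_eq_or_exists_eq_of_card_eq hC hxinj hyd hxy hxd)
      hxy hd hlast hcast hediag fun h => by simp [h] at hS
  change AttackYes (scoringRule α) G k (k - 2) ↔ _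
  rw [AttackYes,
    exists_congr fun I => and_congr_right fun hI => forall_congr' fun I' => imp_congr_right
    fun _ => hchange _ ((card_le_card sdiff_subset).trans (hI.trans hkn)),
    SimpleGraph.exists_forall_exists_adj_sdiff_iff hk2]
  simp only [SimpleGraph.isNClique_map_iff (by omega : 1 < k)]
  simp +contextual [SimpleGraph.isNClique_iff, SimpleGraph.isClique_iff, Set.Pairwise, and_comm]

/-- the Clique reduction instance for Optimal Attack under a scoring
rule. -/
theorem stmt12 (n m : ℕ) (hm : 1 ≤ m) (e : Fin m → Sym2 (Fin n))
    (hediag : ∀ j, ¬ (e j).IsDiag) (heinj : Function.Injective e)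
    (k : ℕ) (hk2 : 2 ≤ k) (hkn : k ≤ n)
    {C : Type} [Fintype C] [DecidableEq C] (hC : Fintype.card C = m + 2)
    (x : Fin m → C) (hxinj : Function.Injective x) (y d : C) (hyd : y ≠ d)
    (hxy : ∀ j, x j ≠ y) (hxd : ∀ j, x j ≠ d)
    (α : Fin (m + 2) → ℝ) (hmono : IsMonotoneScore α) (hnorm : IsNormalized α)
    (Pf : C → C → Multiset (Vote C (m + 2)))
    (hPf : ∀ u v : C, u ≠ v → PfGood α (Pf u v) u v) :
    AttackYes (scoringRule α)
      (Fin.snoc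
        (fun i : Fin n =>
          (∑ z ∈ Finset.univ.erase d, (10 * m) • Pf d z) +
            ∑ j ∈ Finset.univ.filter (fun j => i ∈ e j), 2 • Pf (x j) d)
        (∑ j, Pf d (x j)))
      k (k - 2) ↔
    ∃ T : Finset (Fin n), T.card = k ∧
      ∀ u ∈ T, ∀ v ∈ T, u ≠ v → ∃ j, e j = s(u, v) :=
  stmt12_general n m hm e hediag k hk2 hkn hC x hxinj y d hyd hxy hxd α Pf hPf
end
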